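/- For a discrete commutative semigroup S, the set J(S) is a closed two-sided ideal of βS, and the closure of K(βS) is contained in J(S). -/
import Mathlib

attribute [local instance] Ultrafilter.semigroup

variable {S : Type*}

/-- The product `∏_{t ∈ H} f t` in a (commutative) semigroup, computed in increasing
order of indices; junk value `f 0` if `H = ∅`. -/
def semigroupProd [Semigroup S] (f : ℕ → S) (H : Finset ℕ) : S :=
  if h : H.Nonempty then
    (((H.erase (H.min' h)).sort (· ≤ ·)).map f).foldl (· * ·) (f (H.min' h))
  else f 0

/-- `A` is a J-set in the commutative semigroup `S`. -/
def IsJSet [CommSemigroup S] (A : Set S) : Prop :=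
  ∀ F : Finset (ℕ → S), ∃ (a : S) (H : Finset ℕ), H.Nonempty ∧
    ∀ f ∈ F, a * semigroupProd f H ∈ A

/-- `J(S)`: the ultrafilters on `S` all of whose members are J-sets. -/
def JSetUltra [CommSemigroup S] : Set (Ultrafilter S) :=
  {p | ∀ A ∈ p, IsJSet A}

/-- `I` is a two-sided ideal of `βS`. -/
def IsUltraIdeal [Semigroup S] (I : Set (Ultrafilter S)) : Prop :=
  I.Nonempty ∧ ∀ p ∈ I, ∀ q : Ultrafilter S, q * p ∈ I ∧ p * q ∈ I

/-- `p` lies in the smallest two-sided ideal `K(βS)` (the intersection of all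
two-sided ideals of `βS`). -/
def InSmallestIdeal [Semigroup S] (p : Ultrafilter S) : Prop :=
  ∀ I : Set (Ultrafilter S), IsUltraIdeal I → p ∈ I

lemma withOne_foldl [Semigroup S] (l : List S) (b : S) :
    ((l.foldl (· * ·) b : S) : WithOne S) =
      (b : WithOne S) * (l.map (fun s : S => (s : WithOne S))).prod := by
  induction l generalizing b with
  | nil => simp
  | cons a l ih => simp [ih (b * a), WithOne.coe_mul, mul_assoc]

lemma coe_semigroupProd [CommSemigroup S] (f : ℕ → S) (H : Finset ℕ) (h : H.Nonempty) :
    ((semigroupProd f H : S) : WithOne S) = ∏ t ∈ H, (f t : WithOne S) := by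
  rw [semigroupProd, dif_pos h, withOne_foldl, List.map_map]
  have hperm : List.Perm (((H.erase (H.min' h)).sort (· ≤ ·)).map ((fun s : S => (s : WithOne S)) ∘ f))
      ((H.erase (H.min' h)).toList.map ((fun s : S => (s : WithOne S)) ∘ f)) :=
    (Finset.sort_perm_toList _ _).map _
  rw [hperm.prod_eq]
  rw [show (((H.erase (H.min' h)).toList.map ((fun s : S => (s : WithOne S)) ∘ f))).prod
      = ∏ t ∈ H.erase (H.min' h), ((f t : WithOne S)) from Finset.prod_map_toList _ _]
  exact Finset.mul_prod_erase H (fun t => (f t : WithOne S)) (H.min'_mem h)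

lemma exists_coe_mul_prod [CommSemigroup S] {β : Type*} (T : Finset β) (g : β → S) :
    ∀ s₀ : S, ∃ s : S,
      (s₀ : WithOne S) * ∏ t ∈ T, (g t : WithOne S) = (s : WithOne S) := by
  classical
  induction T using Finset.induction with
  | empty => exact fun s₀ => ⟨s₀, by simp⟩
  | @insert a T ha ih =>
    intro s₀
    obtain ⟨s, hs⟩ := ih (s₀ * g a)
    refine ⟨s, ?_⟩
    rw [Finset.prod_insert ha, ← mul_assoc, ← WithOne.coe_mul, hs]

lemma exists_coe_prod [CommSemigroup S] {β : Type*} (T : Finset β) (hT : T.Nonempty)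
    (g : β → S) : ∃ s : S, ∏ t ∈ T, (g t : WithOne S) = (s : WithOne S) := by
  classical
  obtain ⟨a, ha⟩ := hT
  obtain ⟨s, hs⟩ := exists_coe_mul_prod (T.erase a) g (g a)
  refine ⟨s, ?_⟩
  rw [← hs]
  exact (Finset.mul_prod_erase T (fun t => ((g t : S) : WithOne S)) ha).symm

/-- Piecewise syndeticity (the form we need). -/
def PWS [CommSemigroup S] (A : Set S) : Prop :=
  ∃ G : Finset S, G.Nonempty ∧ ∀ E : Finset S, ∃ x : S, ∀ e ∈ E, ∃ g ∈ G, g * (e * x) ∈ A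

lemma pws_isJSet [CommSemigroup S] [Nonempty S] {A : Set S} (h : PWS A) : IsJSet A := by
  classical
  intro F
  obtain ⟨G, hG, hth⟩ := h
  by_cases hF : F.Nonempty
  · haveI : Nonempty {f // f ∈ F} := hF.to_subtype
    haveI : Nonempty {g // g ∈ G} := hG.to_subtype
    obtain ⟨ι, _inst, hHJ⟩ :=
      Combinatorics.Line.exists_mono_in_high_dimension {f // f ∈ F} {g // g ∈ G}
    by_cases hι : Nonempty ι
    · set e : ι ↪ ℕ := (Fintype.equivFin ι).toEmbedding.trans Fin.valEmbedding with he
      have hQ : ∀ w : ι → {f // f ∈ F}, ∃ s : S,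
          ∏ i ∈ Finset.univ, (((w i).1 (e i) : S) : WithOne S) = (s : WithOne S) :=
        fun w => exists_coe_prod Finset.univ Finset.univ_nonempty _
      choose P hP using hQ
      obtain ⟨x, hx⟩ := hth (Finset.univ.image P)
      have hcol : ∀ w : ι → {f // f ∈ F}, ∃ g : {g // g ∈ G}, g.1 * (P w * x) ∈ A := by
        intro w
        obtain ⟨g, hg, hgx⟩ := hx (P w) (Finset.mem_image_of_mem _ (Finset.mem_univ _))
        exact ⟨⟨g, hg⟩, hgx⟩
      choose C hC using hcol
      obtain ⟨l, c, hl⟩ := hHJ C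
      set Hι : Finset ι := Finset.univ.filter (fun i => l.idxFun i = none) with hHι
      have hHιne : Hι.Nonempty := by
        obtain ⟨i, hi⟩ := l.proper
        exact ⟨i, by simp [hHι, hi]⟩
      set H : Finset ℕ := Hι.image e with hH
      have hHne : H.Nonempty := hHιne.image _
      -- the constant part of the line
      set a₀ : {f // f ∈ F} := Classical.arbitrary _
      set R : WithOne S :=
        ∏ i ∈ Finset.univ \ Hι, ((((l.idxFun i).getD a₀).1 (e i) : S) : WithOne S) with hR
      have hdecomp : ∀ a : {f // f ∈ F},
          ((P (l a) : S) : WithOne S) = R * ((semigroupProd a.1 H : S) : WithOne S) := by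
        intro a
        rw [← hP (l a), ← Finset.prod_sdiff (Finset.subset_univ Hι)]
        congr 1
        · apply Finset.prod_congr rfl
          intro i hi
          have hnone : l.idxFun i ≠ none := by
            intro hcontra
            simp [hHι, hcontra] at hi
          obtain ⟨b, hb⟩ := Option.ne_none_iff_exists'.mp hnone
          have : (l a) i = b := by simp [Combinatorics.Line.coe_apply, hb]
          rw [this, hb]
          simp
        · rw [coe_semigroupProd _ _ hHne, hH, Finset.prod_image
            (fun i _ j _ hij => e.injective hij)]
          apply Finset.prod_congr rfl
          intro i hi
          have hnone : l.idxFun i = none := by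
            simp only [hHι, Finset.mem_filter] at hi
            exact hi.2
          have : (l a) i = a := by simp [Combinatorics.Line.coe_apply, hnone]
          rw [this]
      obtain ⟨s, hs⟩ := exists_coe_mul_prod (Finset.univ \ Hι)
        (fun i => (((l.idxFun i).getD a₀).1 (e i) : S)) c.1
      refine ⟨s * x, H, hHne, fun f hf => ?_⟩
      have key := hC (l ⟨f, hf⟩)
      rw [hl ⟨f, hf⟩] at key
      have heq : (s * x) * semigroupProd f H = c.1 * (P (l ⟨f, hf⟩) * x) := by
        have : ((((s * x) * semigroupProd f H : S)) : WithOne S)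
            = (((c.1 * (P (l ⟨f, hf⟩) * x) : S)) : WithOne S) := by
          simp only [WithOne.coe_mul]
          rw [← hR] at hs
          rw [hdecomp ⟨f, hf⟩, ← hs]
          ac_rfl
        exact WithOne.coe_inj.mp this
      rw [heq]
      exact key
    · obtain ⟨l, -⟩ := hHJ (fun _ => Classical.arbitrary _)
      obtain ⟨i, -⟩ := l.proper
      exact absurd ⟨i⟩ hι
  · refine ⟨Classical.arbitrary S, {0}, Finset.singleton_nonempty _, fun f hf => ?_⟩
    exact absurd ⟨f, hf⟩ hF

lemma mem_ultra_mul [Semigroup S] {A : Set S} {U V : Ultrafilter S} :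
    A ∈ U * V ↔ {a : S | {b : S | a * b ∈ A} ∈ V} ∈ U := Iff.rfl

lemma jSetUltra_isClosed' [CommSemigroup S] : IsClosed (JSetUltra (S := S)) := by
  have h : JSetUltra (S := S) = ⋂ A ∈ {A : Set S | ¬ IsJSet A}, {p : Ultrafilter S | A ∈ p}ᶜ := by
    ext p
    simp only [JSetUltra, Set.mem_setOf_eq, Set.mem_iInter, Set.mem_compl_iff]
    constructor
    · intro h A hA hAp
      exact hA (h A hAp)
    · intro h A hAp
      by_contra hJ
      exact h A hJ hAp
  rw [h]
  exact isClosed_biInter fun A _ => (ultrafilter_isOpen_basic A).isClosed_compl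

lemma jSetUltra_mul_left [CommSemigroup S] {p : Ultrafilter S} (hp : p ∈ JSetUltra)
    (q : Ultrafilter S) : q * p ∈ JSetUltra := by
  intro A hA
  rw [mem_ultra_mul] at hA
  obtain ⟨a, ha⟩ := Ultrafilter.nonempty_of_mem hA
  intro F
  obtain ⟨c, H, hHne, hc⟩ := hp _ ha F
  refine ⟨a * c, H, hHne, fun f hf => ?_⟩
  rw [mul_assoc]
  exact hc f hf

lemma jSetUltra_mul_right [CommSemigroup S] {p : Ultrafilter S} (hp : p ∈ JSetUltra)
    (q : Ultrafilter S) : p * q ∈ JSetUltra := by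
  intro A hA
  rw [mem_ultra_mul] at hA
  intro F
  obtain ⟨c, H, hHne, hc⟩ := hp _ hA F
  have hD : (⋂ f ∈ F, {b : S | (c * semigroupProd f H) * b ∈ A}) ∈ q :=
    (Filter.biInter_finset_mem F).mpr (fun f hf => hc f hf)
  obtain ⟨b, hb⟩ := Ultrafilter.nonempty_of_mem hD
  simp only [Set.mem_iInter, Set.mem_setOf_eq] at hb
  refine ⟨c * b, H, hHne, fun f hf => ?_⟩
  rw [mul_right_comm]
  exact hb f hf

lemma exists_pws_ultra [CommSemigroup S] [Nonempty S] :
    ∃ p : Ultrafilter S, ∀ A ∈ p, PWS A := by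
  classical
  obtain ⟨m, -, hm𝒞, hmin⟩ := zorn_superset_nonempty
    {L : Set (Ultrafilter S) | L.Nonempty ∧ IsClosed L ∧
      ∀ p ∈ L, ∀ q : Ultrafilter S, q * p ∈ L}
    (fun c hc hchain hcne => by
      haveI : Nonempty c := hcne.to_subtype
      refine ⟨⋂₀ c, ⟨?_, ?_, ?_⟩, fun s hs => Set.sInter_subset_of_mem hs⟩
      · refine IsCompact.nonempty_sInter_of_directed_nonempty_isCompact_isClosed ?_
          (fun U hU => (hc hU).1) (fun U hU => (hc hU).2.1.isCompact)
          (fun U hU => (hc hU).2.1)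
        intro a ha b hb
        rcases hchain.total ha hb with hab | hba
        · exact ⟨a, ha, subset_rfl, hab⟩
        · exact ⟨b, hb, hba, subset_rfl⟩
      · exact isClosed_sInter fun U hU => (hc hU).2.1
      · intro p hp q U hU
        exact (hc hU).2.2 p (hp U hU) q)
    Set.univ ⟨Set.univ_nonempty, isClosed_univ, fun _ _ _ => Set.mem_univ _⟩
  obtain ⟨hmne, hmcl, hmid⟩ := hm𝒞
  have hminle := hmin
  obtain ⟨p, hp⟩ := hmne
  refine ⟨p, fun A hA => ?_⟩
  -- every element of m generates m as a left ideal
  have hrange : ∀ q ∈ m, m ⊆ Set.range (· * q) := by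
    intro q hq
    refine hminle ⟨⟨q * q, q, rfl⟩, ?_, ?_⟩ ?_
    · rw [← Set.image_univ]
      exact (isCompact_univ.image (Ultrafilter.continuous_mul_left q)).isClosed
    · rintro _ ⟨r, rfl⟩ q'
      exact ⟨q' * r, show q' * r * q = q' * (r * q) from mul_assoc q' r q⟩
    · rintro _ ⟨r, rfl⟩
      exact hmid q hq r
  have hcover : m ⊆ ⋃ s : S, {q : Ultrafilter S | {b | s * b ∈ A} ∈ q} := by
    intro q hq
    obtain ⟨r, hr⟩ := hrange q hq hp
    have hmem : A ∈ r * q := by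
      show A ∈ (fun x => x * q) r
      rw [hr]
      exact hA
    rw [mem_ultra_mul] at hmem
    obtain ⟨s, hs⟩ := Ultrafilter.nonempty_of_mem hmem
    exact Set.mem_iUnion.mpr ⟨s, hs⟩
  obtain ⟨G, hGc⟩ := hmcl.isCompact.elim_finite_subcover
    (fun s : S => {q : Ultrafilter S | {b | s * b ∈ A} ∈ q})
    (fun s => ultrafilter_isOpen_basic _) hcover
  have hpG := hGc hp
  simp only [Set.mem_iUnion] at hpG
  obtain ⟨g₀, hg₀G, -⟩ := hpG
  refine ⟨G, ⟨g₀, hg₀G⟩, fun E => ?_⟩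
  have hTmem : ∀ q ∈ m, {b : S | ∃ g ∈ G, g * b ∈ A} ∈ q := by
    intro q hq
    have hq' := hGc hq
    simp only [Set.mem_iUnion] at hq'
    obtain ⟨g, hgG, hgq⟩ := hq'
    exact Filter.mem_of_superset hgq fun b hb => ⟨g, hgG, hb⟩
  have hE : (⋂ e ∈ E, {b : S | ∃ g ∈ G, g * (e * b) ∈ A}) ∈ p := by
    refine (Filter.biInter_finset_mem E).mpr ?_
    intro e he
    have hmem : {b : S | ∃ g ∈ G, g * b ∈ A} ∈ (pure e : Ultrafilter S) * p :=
      hTmem _ (hmid p hp (pure e))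
    rw [mem_ultra_mul, Ultrafilter.mem_pure] at hmem
    exact hmem
  obtain ⟨x, hx⟩ := Ultrafilter.nonempty_of_mem hE
  simp only [Set.mem_iInter, Set.mem_setOf_eq] at hx
  exact ⟨x, hx⟩

/-- For a discrete commutative semigroup `S`, `J(S)` is a closed two-sided ideal of
`βS`, and `cl K(βS) ⊆ J(S)`. -/
theorem jSetUltra_closed_ideal [CommSemigroup S] [Nonempty S] :
    IsClosed (JSetUltra (S := S)) ∧ IsUltraIdeal (JSetUltra (S := S)) ∧
      closure {p : Ultrafilter S | InSmallestIdeal p} ⊆ JSetUltra := by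
  have hclosed := jSetUltra_isClosed' (S := S)
  have hne : (JSetUltra (S := S)).Nonempty := by
    obtain ⟨p, hp⟩ := exists_pws_ultra (S := S)
    exact ⟨p, fun A hA => pws_isJSet (hp A hA)⟩
  have hideal : IsUltraIdeal (JSetUltra (S := S)) :=
    ⟨hne, fun p hp q => ⟨jSetUltra_mul_left hp q, jSetUltra_mul_right hp q⟩⟩
  exact ⟨hclosed, hideal, closure_minimal (fun p hp => hp _ hideal) hclosed⟩
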